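/- arXiv:1204.4040 — 3 statements merged into one kernel-verified Lean document; each statement's English description precedes it below -/
import Mathlib

section
/- (Gram–Hadamard inequality) Let H be a complex inner product space and let A₁, …, A_n and B₁, …, B_n be vectors in H. Let M be the n×n complex matrix with entries M_{ij} = ⟨A_i, B_j⟩. Then |det M| ≤ ∏_{i=1}^{n} ‖A_i‖ · ‖B_i‖, where ‖·‖ is the norm induced by the inner product. -/
/-!
In an orthonormal basis `e` of an `n`-dimensional space, the matrix `(⟪v i, w j⟫)` factors as
`Xᴴ Y`, where `X` and `Y` are the coordinate matrices of `v` and `w`, so its determinant is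
`conj (det_e v) * det_e w`. Hadamard's inequality `‖det_e v‖ ≤ ∏ ‖v i‖` follows by passing to the
Gram–Schmidt basis `g` of `v`: the change of basis between two orthonormal bases has determinant of
norm one, and the coordinate matrix of `v` in `g` is triangular with diagonal `⟪g i, v i⟫`.
In general, either the `w j` are dependent and the determinant vanishes, or one works in their
span, replacing each `v i` by its orthogonal projection, which does not change the inner products
and does not increase the norms.
-/

open InnerProductSpace Matrix Module Submodule

section

variable {𝕜 E ι : Type*} [RCLike 𝕜] [NormedAddCommGroup E] [InnerProductSpace 𝕜 E]
  [Fintype ι] [DecidableEq ι]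

namespace OrthonormalBasis

theorem norm_det_le_prod_norm [FiniteDimensional 𝕜 E] (b : OrthonormalBasis ι 𝕜 E) (v : ι → E) :
    ‖b.toBasis.det v‖ ≤ ∏ i, ‖v i‖ := by
  let _ : LinearOrder ι := LinearOrder.lift' _ (Fintype.equivFin ι).injective
  let _ : LocallyFiniteOrderBot ι :=
    OrderIso.locallyFiniteOrderBot { Fintype.equivFin ι with map_rel_iff' := Iff.rfl }
  have hdim : finrank 𝕜 E = Fintype.card ι := finrank_eq_card_basis b.toBasis
  set g := gramSchmidtOrthonormalBasis hdim v
  calc ‖b.toBasis.det v‖ = ‖b.toBasis.det g * g.toBasis.det v‖ := by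
        rw [DFunLike.congr_fun (b.toBasis.det.eq_smul_basis_det g.toBasis) v]
        rfl
    _ = ‖∏ i, ⟪g i, v i⟫_𝕜‖ := by
        rw [norm_mul, b.det_to_matrix_orthonormalBasis g, one_mul, gramSchmidtOrthonormalBasis_det]
    _ ≤ ∏ i, ‖v i‖ := by
        rw [norm_prod]
        gcongr with i
        simpa [g.orthonormal.1 i] using norm_inner_le_norm (𝕜 := 𝕜) (g i) (v i)

omit [DecidableEq ι] in
theorem conjTranspose_toMatrix_mul_toMatrix {κ : Type*} (b : OrthonormalBasis ι 𝕜 E)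
    (v w : κ → E) :
    (b.toBasis.toMatrix v)ᴴ * b.toBasis.toMatrix w = of fun i j => ⟪v i, w j⟫_𝕜 := by
  ext i j
  simp [mul_apply, Basis.toMatrix_apply, b.repr_apply_apply, b.sum_inner_mul_inner]

theorem det_inner_eq_star_det_mul_det (b : OrthonormalBasis ι 𝕜 E) (v w : ι → E) :
    (of fun i j => ⟪v i, w j⟫_𝕜).det = star (b.toBasis.det v) * b.toBasis.det w := by
  rw [← b.conjTranspose_toMatrix_mul_toMatrix, det_mul, det_conjTranspose, Basis.det_apply,
    Basis.det_apply]

end OrthonormalBasis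

theorem norm_det_inner_le_of_finrank_eq [FiniteDimensional 𝕜 E]
    (h : finrank 𝕜 E = Fintype.card ι) (v w : ι → E) :
    ‖(of fun i j => ⟪v i, w j⟫_𝕜).det‖ ≤ (∏ i, ‖v i‖) * ∏ i, ‖w i‖ := by
  let b := (stdOrthonormalBasis 𝕜 E).reindex (Fintype.equivFinOfCardEq h.symm).symm
  rw [b.det_inner_eq_star_det_mul_det, norm_mul, norm_star]
  gcongr
  exacts [b.norm_det_le_prod_norm v, b.norm_det_le_prod_norm w]

theorem det_inner_eq_zero_of_not_linearIndependent {w : ι → E} (hw : ¬LinearIndependent 𝕜 w)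
    (v : ι → E) : (of fun i j => ⟪v i, w j⟫_𝕜).det = 0 := by
  obtain ⟨c, hc, j, hj⟩ := Fintype.not_linearIndependent_iff.mp hw
  refine exists_mulVec_eq_zero_iff.mp ⟨c, fun h => hj (congrFun h j), funext fun i => ?_⟩
  simpa [mulVec, dotProduct, inner_sum, inner_smul_right, mul_comm] using
    congrArg (⟪v i, ·⟫_𝕜) hc

theorem norm_det_inner_le_prod_norm (v w : ι → E) :
    ‖(of fun i j => ⟪v i, w j⟫_𝕜).det‖ ≤ ∏ i, ‖v i‖ * ‖w i‖ := by
  rw [Finset.prod_mul_distrib]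
  by_cases hw : LinearIndependent 𝕜 w
  swap
  · rw [det_inner_eq_zero_of_not_linearIndependent hw, norm_zero]
    positivity
  set K := span 𝕜 (Set.range w)
  have : FiniteDimensional 𝕜 K := .span_of_finite 𝕜 (Set.finite_range w)
  let v' : ι → K := fun i => K.orthogonalProjectionOnto (v i)
  let w' : ι → K := fun j => ⟨w j, subset_span ⟨j, rfl⟩⟩
  have hvw : (of fun i j => ⟪v i, w j⟫_𝕜) = of fun i j => ⟪v' i, w' j⟫_𝕜 := by
    ext i j
    simp [v', w']
  calc ‖(of fun i j => ⟪v i, w j⟫_𝕜).det‖ ≤ (∏ i, ‖v' i‖) * ∏ i, ‖w' i‖ :=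
        hvw ▸ norm_det_inner_le_of_finrank_eq (finrank_span_eq_card hw) v' w'
    _ ≤ (∏ i, ‖v i‖) * ∏ i, ‖w i‖ := by
        gcongr with i
        · exact K.norm_orthogonalProjectionOnto_apply_le (v i)
        · rfl

end

/-- Gram–Hadamard inequality: if `M_{ij} = ⟨A_i, B_j⟩` for vectors `A_i, B_j` in a
complex inner product space, then `|det M| ≤ ∏_i ‖A_i‖ ‖B_i‖`. -/
theorem gram_hadamard {H : Type*} [NormedAddCommGroup H] [InnerProductSpace ℂ H]
    (n : ℕ) (A B : Fin n → H) (M : Matrix (Fin n) (Fin n) ℂ)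
    (hM : ∀ i j : Fin n, M i j = (inner ℂ (A i) (B j) : ℂ)) :
    ‖M.det‖ ≤ ∏ i : Fin n, ‖A i‖ * ‖B i‖ := by
  obtain rfl : M = of fun i j => ⟪A i, B j⟫_ℂ := Matrix.ext hM
  exact norm_det_inner_le_prod_norm A B
end

section
/- For all real numbers α > 0 and c > 0, the doubly infinite sum c_α := Σ_{h ∈ ℤ} 2^{α h} e^{−c·2^h} converges and satisfies c_α ≤ c^{−α} · ( Γ(α)/log 2 + (α/e)^α ), where Γ is the Euler Gamma function and log is the natural logarithm. -/
/-!
Taking logarithms, `h ↦ α h log 2 - c 2^h` is concave: from `e^t ≥ 1 + t` one gets the tangent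
line bound `2^x ≥ 2^y (1 + (x - y) log 2)`. Hence the summand is unimodal in `h`, with maximum
`c^{-α} (α/e)^α` where `c 2^h = α`. For a unimodal `f`, after discarding the largest integer
sample, each remaining `f i` is the smaller of two neighbouring samples, which is at most the
integral of `f` over the unit interval between them; so `Σ f(i) ≤ ∫ f + max f`. The substitution
`y = 2^x` turns the integral into `c^{-α} Γ(α) / log 2`.
-/

open Real Set MeasureTheory

theorem summable_and_tsum_le_add_tsum_min_succ {a : ℤ → ℝ} {p : ℤ} (ha : 0 ≤ a)
    (hup : ∀ i < p, a i ≤ a (i + 1)) (hdown : ∀ i ≥ p, a (i + 1) ≤ a i)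
    (hmin : Summable fun j => min (a j) (a (j + 1))) :
    Summable a ∧ ∑' i, a i ≤ a p + ∑' j, min (a j) (a (j + 1)) := by
  -- `σ` closes the gap left by deleting the peak `p`.
  set σ : ℤ → ℤ := fun i => if i < p then i else i - 1
  have hσ : ∀ i ≠ p, a i ≤ min (a (σ i)) (a (σ i + 1)) := by
    intro i hi
    by_cases h : i < p
    · simpa only [σ, if_pos h] using le_min le_rfl (hup i h)
    · have := hdown (i - 1) (by omega)
      simp only [σ, if_neg h, sub_add_cancel] at this ⊢
      exact le_min this le_rfl
  have hσ_inj : InjOn σ {i | i ≠ p} := by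
    intro i hi j hj
    simp only [σ, mem_ofPred_eq] at hi hj ⊢
    split_ifs <;> omega
  have hfin (s : Finset ℤ) : ∑ i ∈ s, a i ≤ a p + ∑' j, min (a j) (a (j + 1)) := by
    classical
    calc ∑ i ∈ s, a i ≤ ∑ i ∈ insert p s, a i :=
          Finset.sum_le_sum_of_subset_of_nonneg (Finset.subset_insert p s) fun i _ _ => ha i
      _ = a p + ∑ i ∈ s.erase p, a i := by
          rw [← Finset.add_sum_erase _ _ (Finset.mem_insert_self p s),
            Finset.erase_insert_eq_erase]
      _ ≤ a p + ∑ i ∈ s.erase p, min (a (σ i)) (a (σ i + 1)) := by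
          gcongr with i hi
          exact hσ i (Finset.ne_of_mem_erase hi)
      _ = a p + ∑ j ∈ (s.erase p).image σ, min (a j) (a (j + 1)) := by
          rw [Finset.sum_image (hσ_inj.mono fun i hi => Finset.ne_of_mem_erase hi)]
      _ ≤ a p + ∑' j, min (a j) (a (j + 1)) := by
          gcongr
          exact hmin.sum_le_tsum _ fun j _ => le_min (ha j) (ha (j + 1))
  exact ⟨summable_of_sum_le ha hfin, Real.tsum_le_of_sum_le ha hfin⟩

section Unimodal

variable {f : ℝ → ℝ} {m : ℝ}

theorem min_le_of_unimodal (hmono : MonotoneOn f (Iic m)) (hanti : AntitoneOn f (Ici m))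
    {x y z : ℝ} (hz : z ∈ Icc x y) : min (f x) (f y) ≤ f z := by
  rcases le_total z m with hzm | hmz
  · exact (min_le_left _ _).trans (hmono (hz.1.trans hzm) hzm hz.1)
  · exact (min_le_right _ _).trans (hanti hmz (hmz.trans hz.2) hz.2)

theorem exists_int_peak_of_unimodal (hmono : MonotoneOn f (Iic m))
    (hanti : AntitoneOn f (Ici m)) :
    ∃ p : ℤ, (∀ i < p, f i ≤ f (i + 1)) ∧ ∀ i ≥ p, f (i + 1) ≤ f i := by
  have hfloor_le := Int.floor_le m
  have hlt_floor := Int.lt_floor_add_one m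
  have hup (i : ℤ) (hi : i < ⌊m⌋) : f i ≤ f (i + 1) := by
    have : (i : ℝ) + 1 ≤ ⌊m⌋ := by exact_mod_cast hi
    exact hmono (by simp only [mem_Iic]; linarith) (by simp only [mem_Iic]; linarith) (by linarith)
  have hdown (i : ℤ) (hi : ⌊m⌋ + 1 ≤ i) : f (i + 1) ≤ f i := by
    have : (⌊m⌋ : ℝ) + 1 ≤ i := by exact_mod_cast hi
    exact hanti (by simp only [mem_Ici]; linarith) (by simp only [mem_Ici]; linarith) (by linarith)
  rcases le_total (f ⌊m⌋) (f (⌊m⌋ + 1)) with h | h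
  · refine ⟨⌊m⌋ + 1, fun i hi => ?_, fun i hi => hdown i hi⟩
    rcases (Int.lt_add_one_iff.1 hi).lt_or_eq with hi | rfl
    exacts [hup i hi, h]
  · refine ⟨⌊m⌋, fun i hi => hup i hi, fun i hi => ?_⟩
    rcases hi.lt_or_eq with hi | rfl
    exacts [hdown i hi, h]

theorem summable_int_and_tsum_le_integral_add (hf : Integrable f) (hf0 : 0 ≤ f)
    (hmono : MonotoneOn f (Iic m)) (hanti : AntitoneOn f (Ici m)) {M : ℝ} (hM : ∀ x, f x ≤ M) :
    Summable (fun i : ℤ => f i) ∧ ∑' i : ℤ, f i ≤ (∫ x, f x) + M := by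
  have hG : HasSum (fun j : ℤ => ∫ x in (j : ℝ)..j + 1, f x) (∫ x, f x) := by
    simpa using hf.hasSum_intervalIntegral 0
  have hmin_le_integral (j : ℤ) : min (f j) (f ((j + 1 : ℤ) : ℝ)) ≤ ∫ x in (j : ℝ)..j + 1, f x := by
    have h := setIntegral_ge_of_const_le_real measurableSet_Ioc (by simp)
      (fun x hx => min_le_of_unimodal hmono hanti (Ioc_subset_Icc_self hx))
      (hf.integrableOn (s := Ioc (j : ℝ) (j + 1)))
    rw [intervalIntegral.integral_of_le (by linarith)]
    simpa using h
  obtain ⟨p, hup, hdown⟩ := exists_int_peak_of_unimodal hmono hanti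
  have hmin_summable : Summable fun j : ℤ => min (f j) (f ((j + 1 : ℤ) : ℝ)) :=
    hG.summable.of_nonneg_of_le (fun j => le_min (hf0 _) (hf0 _)) hmin_le_integral
  obtain ⟨hsum, hle⟩ := summable_and_tsum_le_add_tsum_min_succ (a := fun i : ℤ => f i) (p := p)
    (fun i => hf0 i) (by simpa using hup) (by simpa using hdown) hmin_summable
  refine ⟨hsum, hle.trans ?_⟩
  rw [add_comm]
  exact add_le_add (hmin_summable.tsum_le_tsum hmin_le_integral hG.summable |>.trans_eq hG.tsum_eq) (hM p)

end Unimodal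

noncomputable def scaleWeight (b α c x : ℝ) : ℝ := b ^ (α * x) * exp (-c * b ^ x)

section ScaleWeight

variable {b α c : ℝ}

theorem scaleWeight_nonneg (hb : 0 ≤ b) (x : ℝ) : 0 ≤ scaleWeight b α c x := by
  unfold scaleWeight; positivity

theorem scaleWeight_le_mul_exp (hb : 0 < b) (hc : 0 ≤ c) (x y : ℝ) :
    scaleWeight b α c x ≤ scaleWeight b α c y * exp (log b * (α - c * b ^ y) * (x - y)) := by
  have htangent : b ^ y * (log b * (x - y) + 1) ≤ b ^ x :=
    calc b ^ y * (log b * (x - y) + 1) ≤ b ^ y * exp (log b * (x - y)) := by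
          gcongr; exact add_one_le_exp _
      _ = b ^ x := by rw [← rpow_def_of_pos hb, ← rpow_add hb, add_sub_cancel]
  unfold scaleWeight
  rw [rpow_def_of_pos hb (α * x), rpow_def_of_pos hb (α * y), ← exp_add, ← exp_add, ← exp_add]
  exact exp_le_exp.mpr (by nlinarith [mul_le_mul_of_nonneg_left htangent hc])

theorem scaleWeight_le (hb : 0 < b) (hb1 : b ≠ 1) (hα : 0 < α) (hc : 0 < c) (x : ℝ) :
    scaleWeight b α c x ≤ c ^ (-α) * (α / exp 1) ^ α := by
  set y := logb b (α / c)
  have hy : b ^ y = α / c := rpow_logb hb hb1 (by positivity)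
  calc scaleWeight b α c x ≤ scaleWeight b α c y := by
        simpa [hy, mul_div_cancel₀ α hc.ne'] using scaleWeight_le_mul_exp (α := α) hb hc.le x y
    _ = c ^ (-α) * (α / exp 1) ^ α := by
        rw [scaleWeight, mul_comm α, rpow_mul hb.le, hy, div_rpow hα.le hc.le,
          div_rpow hα.le (exp_pos 1).le, exp_one_rpow, rpow_neg hc.le,
          show -c * (α / c) = -α by field_simp, exp_neg]
        ring

theorem monotoneOn_scaleWeight (hb : 1 < b) (hα : 0 < α) (hc : 0 < c) :
    MonotoneOn (scaleWeight b α c) (Iic (logb b (α / c))) := by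
  intro x _ y hy hxy
  have hcy : c * b ^ y ≤ α := by
    have := rpow_le_rpow_of_exponent_le hb.le hy
    rw [rpow_logb (by linarith) hb.ne' (by positivity)] at this
    rwa [le_div_iff₀' hc] at this
  have hexp : log b * (α - c * b ^ y) * (x - y) ≤ 0 :=
    mul_nonpos_of_nonneg_of_nonpos (mul_nonneg (log_pos hb).le (by linarith)) (by linarith)
  calc scaleWeight b α c x ≤ scaleWeight b α c y * exp (log b * (α - c * b ^ y) * (x - y)) :=
        scaleWeight_le_mul_exp (by linarith) hc.le x y
    _ ≤ scaleWeight b α c y := by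
        apply mul_le_of_le_one_right (scaleWeight_nonneg (by linarith) y)
        rwa [exp_le_one_iff]

theorem antitoneOn_scaleWeight (hb : 1 < b) (hα : 0 < α) (hc : 0 < c) :
    AntitoneOn (scaleWeight b α c) (Ici (logb b (α / c))) := by
  intro x hx y _ hxy
  have hcx : α ≤ c * b ^ x := by
    have := rpow_le_rpow_of_exponent_le hb.le hx
    rw [rpow_logb (by linarith) hb.ne' (by positivity)] at this
    rwa [div_le_iff₀' hc] at this
  have hexp : log b * (α - c * b ^ x) * (y - x) ≤ 0 :=
    mul_nonpos_of_nonpos_of_nonneg (mul_nonpos_of_nonneg_of_nonpos (log_pos hb).le (by linarith))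
      (by linarith)
  calc scaleWeight b α c y ≤ scaleWeight b α c x * exp (log b * (α - c * b ^ x) * (y - x)) :=
        scaleWeight_le_mul_exp (by linarith) hc.le y x
    _ ≤ scaleWeight b α c x := by
        apply mul_le_of_le_one_right (scaleWeight_nonneg (by linarith) x)
        rwa [exp_le_one_iff]

end ScaleWeight

section ChangeOfVariables

variable {b : ℝ}

theorem image_univ_const_rpow (hb : 0 < b) (hb1 : b ≠ 1) :
    (fun x : ℝ => b ^ x) '' univ = Ioi 0 := by
  rw [image_univ]
  ext y
  exact ⟨by rintro ⟨x, rfl⟩; exact rpow_pos_of_pos hb x,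
    fun hy => ⟨logb b y, rpow_logb hb hb1 hy⟩⟩

theorem hasDerivWithinAt_const_rpow_univ (hb : 0 < b) :
    ∀ x ∈ (univ : Set ℝ), HasDerivWithinAt (fun x : ℝ => b ^ x) (b ^ x * log b) univ x :=
  fun x _ => (hasStrictDerivAt_const_rpow hb x).hasDerivAt.hasDerivWithinAt

theorem injOn_const_rpow_univ (hb : 0 < b) (hb1 : b ≠ 1) : InjOn (fun x : ℝ => b ^ x) univ :=
  fun _ _ _ _ h => (rpow_right_inj hb hb1).1 h

theorem integrableOn_Ioi_iff_integrable_comp_const_rpow (hb : 0 < b) (hb1 : b ≠ 1) (g : ℝ → ℝ) :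
    IntegrableOn g (Ioi 0) ↔ Integrable fun x : ℝ => b ^ x * |log b| * g (b ^ x) := by
  have h := integrableOn_image_iff_integrableOn_abs_deriv_smul MeasurableSet.univ
    (hasDerivWithinAt_const_rpow_univ hb) (injOn_const_rpow_univ hb hb1) g
  simpa [image_univ_const_rpow hb hb1, abs_mul, abs_of_pos (rpow_pos_of_pos hb _)] using h

theorem integral_Ioi_eq_integral_comp_const_rpow (hb : 0 < b) (hb1 : b ≠ 1) (g : ℝ → ℝ) :
    ∫ y in Ioi 0, g y = ∫ x : ℝ, b ^ x * |log b| * g (b ^ x) := by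
  have h := integral_image_eq_integral_abs_deriv_smul MeasurableSet.univ
    (hasDerivWithinAt_const_rpow_univ hb) (injOn_const_rpow_univ hb hb1) g
  simpa [image_univ_const_rpow hb hb1, abs_mul, abs_of_pos (rpow_pos_of_pos hb _)] using h

end ChangeOfVariables

section ScaleWeightIntegral

variable {b α c : ℝ}

theorem log_mul_scaleWeight (hb : 1 < b) (x : ℝ) :
    b ^ x * |log b| * ((b ^ x) ^ (α - 1) * exp (-(c * b ^ x))) = log b * scaleWeight b α c x := by
  have hbx : b ^ x ≠ 0 := (rpow_pos_of_pos (by linarith) x).ne'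
  rw [abs_of_pos (log_pos hb), rpow_sub_one hbx, scaleWeight, mul_comm α, rpow_mul (by linarith),
    neg_mul]
  field_simp

theorem integrable_scaleWeight (hb : 1 < b) (hα : 0 < α) (hc : 0 < c) :
    Integrable (scaleWeight b α c) := by
  have h := (integrableOn_Ioi_iff_integrable_comp_const_rpow (by linarith) hb.ne'
    (fun y => y ^ (α - 1) * exp (-(c * y)))).1
      (by simpa using integrableOn_rpow_mul_exp_neg_mul_rpow (p := 1) (by linarith) one_pos hc)
  simp only [log_mul_scaleWeight hb] at h
  simpa [(log_pos hb).ne'] using h.const_mul (log b)⁻¹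

theorem integral_scaleWeight (hb : 1 < b) (hα : 0 < α) (hc : 0 < c) :
    ∫ x, scaleWeight b α c x = c ^ (-α) * Gamma α / log b := by
  have h := integral_Ioi_eq_integral_comp_const_rpow (by linarith) hb.ne'
    (fun y => y ^ (α - 1) * exp (-(c * y)))
  simp only [log_mul_scaleWeight hb, integral_const_mul,
    integral_rpow_mul_exp_neg_mul_Ioi hα hc] at h
  rw [eq_div_iff (log_pos hb).ne', mul_comm, ← h, one_div, inv_rpow hc.le, rpow_neg hc.le]

end ScaleWeightIntegral

/-- For `α, c > 0`, the doubly infinite sum `c_α = Σ_{h ∈ ℤ} 2^{αh} e^{−c 2^h}`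
converges and satisfies `c_α ≤ c^{−α} (Γ(α)/log 2 + (α/e)^α)`. -/
theorem dyadic_scale_sum_bound (α c : ℝ) (hα : 0 < α) (hc : 0 < c) :
    Summable (fun h : ℤ => (2 : ℝ) ^ (α * (h : ℝ)) * Real.exp (-c * (2 : ℝ) ^ (h : ℝ))) ∧
    (∑' h : ℤ, (2 : ℝ) ^ (α * (h : ℝ)) * Real.exp (-c * (2 : ℝ) ^ (h : ℝ)))
      ≤ c ^ (-α) * (Real.Gamma α / Real.log 2 + (α / Real.exp 1) ^ α) := by
  obtain ⟨hsum, hle⟩ := summable_int_and_tsum_le_integral_add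
    (integrable_scaleWeight one_lt_two hα hc) (scaleWeight_nonneg zero_le_two)
    (monotoneOn_scaleWeight one_lt_two hα hc) (antitoneOn_scaleWeight one_lt_two hα hc)
    (scaleWeight_le two_pos (by norm_num) hα hc)
  refine ⟨hsum, hle.trans_eq ?_⟩
  rw [integral_scaleWeight one_lt_two hα hc]
  ring
end

section
/- Let θ ∈ (0,1), N ∈ ℤ and ρ > 0. Let 𝔐 be the space of real sequences ν = (ν_h)_{h ≤ N} indexed by integers h ≤ N for which the norm ‖ν‖_θ := sup_{k ≤ N} 2^{θ(N−k)}|ν_k| is finite, and let B_ρ = { ν ∈ 𝔐 : ‖ν‖_θ ≤ ρ }. Suppose that for each integer j ≤ N a function β_j : B_ρ → ℝ is given such that, for all ν, ν' ∈ B_ρ and all j ≤ N: |β_j(ν)| ≤ ρ(2 − 2^{−θ})·2^{θ(j−N)} and |β_j(ν) − β_j(ν')| ≤ L·2^{θ(j−N)}·‖ν − ν'‖_θ, where 0 ≤ L < 2 − 2^{−θ}. Define T : B_ρ → 𝔐 by (Tν)_h = −Σ_{j ≤ h} 2^{j−h−1} β_j(ν). Then T maps B_ρ into B_ρ, T is a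 contraction on B_ρ with Lipschitz constant L/(2 − 2^{−θ}) < 1 with respect to ‖·‖_θ, and consequently T has a unique fixed point ν* ∈ B_ρ. -/
/-- `ν` belongs to the ball of radius `ρ` in the weighted `ℓ^∞` norm
`‖ν‖_θ = sup_{k ≤ N} 2^{θ(N−k)} |ν_k|`. -/
def InThetaBall (θ : ℝ) (N : ℤ) (ρ : ℝ) (ν : ℤ → ℝ) : Prop :=
  ∀ k : ℤ, k ≤ N → |ν k| ≤ ρ * (2 : ℝ) ^ (θ * ((k : ℝ) - (N : ℝ)))

/-! The rescaling `ν ↦ (ν k / 2 ^ (θ (k - N)))_{k ≤ N}` identifies the weighted ball with the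
closed `ρ`-ball of `ℓ^∞`, which is complete, and turns the weighted Lipschitz bound on `T` into a
contraction with constant `L / (2 - 2^{-θ})`, so Banach's fixed point theorem applies. Both
estimates on `T` rest on one geometric series:
`∑_{j ≤ h} 2^{j-h-1} 2^{θ(j-N)} = 2^{θ(h-N)} / (2 - 2^{-θ})`. -/

noncomputable section

section WeightedFixedPoint

open Metric

variable {ι : Type*} {s : Set ι} {w : ι → ℝ} {ρ : ℝ}

variable (s w ρ) in
def weightedBall : Set (ι → ℝ) := {ν | ∀ k ∈ s, |ν k| ≤ ρ * w k}

variable (s) in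
abbrev WeightedSeq : Type _ := lp (fun _ : s => ℝ) ⊤

variable (w) in
def weightedExtend (u : s → ℝ) : ι → ℝ :=
  Function.extend Subtype.val (fun k : s => w k * u k) 0

lemma weightedExtend_apply (u : s → ℝ) (k : s) : weightedExtend w u k = w k * u k :=
  Subtype.val_injective.extend_apply _ _ k

lemma weightedExtend_mem_weightedBall (hw : ∀ k ∈ s, 0 < w k)
    (u : closedBall (0 : WeightedSeq s) ρ) :
    weightedExtend w (u : WeightedSeq s) ∈ weightedBall s w ρ := by
  intro k hk
  have hu : |(u : WeightedSeq s) ⟨k, hk⟩| ≤ ρ :=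
    (lp.norm_apply_le_norm ENNReal.top_ne_zero _ _).trans (mem_closedBall_zero_iff.1 u.2)
  rw [weightedExtend_apply _ ⟨k, hk⟩, abs_mul, abs_of_pos (hw k hk), mul_comm]
  exact mul_le_mul_of_nonneg_right hu (hw k hk).le

lemma abs_weightedExtend_sub_le (hw : ∀ k ∈ s, 0 < w k) (u u' : WeightedSeq s) :
    ∀ k ∈ s, |weightedExtend w u k - weightedExtend w u' k| ≤ dist u u' * w k := by
  intro k hk
  rw [dist_eq_norm, weightedExtend_apply _ ⟨k, hk⟩, weightedExtend_apply _ ⟨k, hk⟩, ← mul_sub,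
    abs_mul, abs_of_pos (hw k hk), mul_comm]
  refine mul_le_mul_of_nonneg_right ?_ (hw k hk).le
  simpa using lp.norm_apply_le_norm ENNReal.top_ne_zero (u - u') ⟨k, hk⟩

def weightedRescale (hw : ∀ k ∈ s, 0 < w k) (hρ : 0 ≤ ρ) (ν : ι → ℝ)
    (hν : ν ∈ weightedBall s w ρ) : closedBall (0 : WeightedSeq s) ρ :=
  have hbound : ∀ k : s, ‖ν k / w k‖ ≤ ρ := fun k => by
    rw [Real.norm_eq_abs, abs_div, abs_of_pos (hw k k.2), div_le_iff₀ (hw k k.2)]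
    exact hν k k.2
  ⟨⟨fun k => ν k / w k, memℓp_infty ⟨ρ, Set.forall_mem_range.2 hbound⟩⟩,
    mem_closedBall_zero_iff.2 (lp.norm_le_of_forall_le hρ hbound)⟩

lemma weightedRescale_apply (hw : ∀ k ∈ s, 0 < w k) (hρ : 0 ≤ ρ) (ν : ι → ℝ)
    (hν : ν ∈ weightedBall s w ρ) (k : s) :
    (weightedRescale hw hρ ν hν : WeightedSeq s) k = ν k / w k := rfl

lemma weightedExtend_weightedRescale (hw : ∀ k ∈ s, 0 < w k) (hρ : 0 ≤ ρ) (ν : ι → ℝ)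
    (hν : ν ∈ weightedBall s w ρ) :
    ∀ k ∈ s, weightedExtend w (weightedRescale hw hρ ν hν : WeightedSeq s) k = ν k := by
  intro k hk
  rw [weightedExtend_apply _ ⟨k, hk⟩, weightedRescale_apply, mul_div_cancel₀ _ (hw k hk).ne']

lemma dist_weightedRescale_le (hw : ∀ k ∈ s, 0 < w k) (hρ : 0 ≤ ρ) {ν ν' : ι → ℝ}
    (hν : ν ∈ weightedBall s w ρ) (hν' : ν' ∈ weightedBall s w ρ) {M : ℝ} (hM : 0 ≤ M)
    (hνν' : ∀ k ∈ s, |ν k - ν' k| ≤ M * w k) :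
    dist (weightedRescale hw hρ ν hν) (weightedRescale hw hρ ν' hν') ≤ M := by
  rw [Subtype.dist_eq, dist_eq_norm]
  refine lp.norm_le_of_forall_le hM fun k => ?_
  rw [lp.coeFn_sub, Pi.sub_apply, weightedRescale_apply, weightedRescale_apply, ← sub_div,
    Real.norm_eq_abs, abs_div, abs_of_pos (hw k k.2), div_le_iff₀ (hw k k.2)]
  exact hνν' k k.2

theorem exists_unique_fixed_of_weighted_contraction (hw : ∀ k ∈ s, 0 < w k) (hρ : 0 ≤ ρ)
    {r : ℝ} (hr0 : 0 ≤ r) (hr1 : r < 1) {T : (ι → ℝ) → ι → ℝ}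
    (hmaps : ∀ ν ∈ weightedBall s w ρ, T ν ∈ weightedBall s w ρ)
    (hcontr : ∀ ν ∈ weightedBall s w ρ, ∀ ν' ∈ weightedBall s w ρ, ∀ M : ℝ, 0 ≤ M →
      (∀ k ∈ s, |ν k - ν' k| ≤ M * w k) → ∀ k ∈ s, |T ν k - T ν' k| ≤ r * M * w k) :
    ∃ ν ∈ weightedBall s w ρ, (∀ k ∈ s, ν k = T ν k) ∧
      ∀ ν' ∈ weightedBall s w ρ, (∀ k ∈ s, ν' k = T ν' k) → ∀ k ∈ s, ν' k = ν k := by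
  let B := closedBall (0 : WeightedSeq s) ρ
  have : CompleteSpace B := isClosed_closedBall.completeSpace_coe
  have : Nonempty B := ⟨⟨0, mem_closedBall_self hρ⟩⟩
  have hmem (u : B) := weightedExtend_mem_weightedBall hw u
  let F : B → B := fun u =>
    weightedRescale hw hρ (T (weightedExtend w (u : WeightedSeq s))) (hmaps _ (hmem u))
  have hF : ContractingWith ⟨r, hr0⟩ F := ⟨hr1, LipschitzWith.of_dist_le_mul fun u u' =>
    dist_weightedRescale_le hw hρ _ _ (by positivity) <| hcontr _ (hmem u) _ (hmem u') _
      dist_nonneg (abs_weightedExtend_sub_le hw u u')⟩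
  let u := ContractingWith.fixedPoint F hF
  have hu : F u = u := ContractingWith.fixedPoint_isFixedPt hF
  refine ⟨weightedExtend w (u : WeightedSeq s), hmem u, fun k hk => ?_,
    fun ν' hν' hfix k hk => ?_⟩
  · conv_lhs => rw [← hu]
    exact weightedExtend_weightedRescale hw hρ _ _ k hk
  · have hext := weightedExtend_weightedRescale hw hρ ν' hν'
    have hu' : F (weightedRescale hw hρ ν' hν') = weightedRescale hw hρ ν' hν' := by
      refine dist_le_zero.1 <| dist_weightedRescale_le hw hρ _ _ le_rfl fun j hj => ?_
      rw [hfix j hj]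
      -- `T` only sees values on `s`: this is the contraction estimate with `M = 0`.
      simpa using hcontr _ (hmem _) _ hν' 0 le_rfl (fun i hi => by simp [hext i hi]) j hj
    rw [← hext k hk, ContractingWith.fixedPoint_unique hF hu']

end WeightedFixedPoint

def Int.natEquivLe (h : ℤ) : ℕ ≃ {j : ℤ // j ≤ h} where
  toFun n := ⟨h - n, by omega⟩
  invFun j := (h - j).toNat
  left_inv n := by simp
  right_inv j := Subtype.ext <| by have := j.2; simp; omega

def tailSum (h : ℤ) (b : ℤ → ℝ) : ℝ :=
  ∑' j : {j : ℤ // j ≤ h}, (2 : ℝ) ^ ((j : ℝ) - h - 1) * b j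

section TailSum

variable {θ : ℝ} (N h : ℤ)

lemma hasSum_tailSum_weight (hθ : (2 : ℝ) ^ (-θ) < 2) :
    HasSum (fun j : {j : ℤ // j ≤ h} => (2 : ℝ) ^ ((j : ℝ) - h - 1) * 2 ^ (θ * (j - N)))
      (2 ^ (θ * (h - N)) / (2 - 2 ^ (-θ))) := by
  -- after `j = h - n`, a geometric series in `n` with ratio `2^{-θ} / 2`
  have hq : (2 : ℝ) ^ (-θ) / 2 = 2 ^ (-θ - 1) := (Real.rpow_sub_one two_ne_zero _).symm
  have hterm (n : ℕ) : (2 : ℝ) ^ (((h - n : ℤ) : ℝ) - h - 1) * 2 ^ (θ * ((h - n : ℤ) - N)) =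
      2 ^ (θ * (h - N)) / 2 * (2 ^ (-θ) / 2) ^ n := by
    rw [hq, ← Real.rpow_mul_natCast two_pos.le, ← Real.rpow_sub_one two_ne_zero,
      ← Real.rpow_add two_pos, ← Real.rpow_add two_pos]
    congr 1
    push_cast
    ring
  have hsum : (2 : ℝ) ^ (θ * (h - N)) / 2 * (1 - 2 ^ (-θ) / 2)⁻¹ =
      2 ^ (θ * (h - N)) / (2 - 2 ^ (-θ)) := by
    field_simp
  rw [← (Int.natEquivLe h).hasSum_iff, ← hsum]
  exact ((hasSum_geometric_of_lt_one (by positivity) (by linarith)).mul_left _).congr_fun hterm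

variable {N h}

lemma norm_tailSum_term_le {b : ℤ → ℝ} {C : ℝ} (hb : ∀ j ≤ h, |b j| ≤ C * 2 ^ (θ * (j - N)))
    (j : {j : ℤ // j ≤ h}) :
    ‖(2 : ℝ) ^ ((j : ℝ) - h - 1) * b j‖ ≤
      C * ((2 : ℝ) ^ ((j : ℝ) - h - 1) * 2 ^ (θ * (j - N))) := by
  rw [Real.norm_eq_abs, abs_mul, abs_of_pos (by positivity), mul_left_comm]
  exact mul_le_mul_of_nonneg_left (hb j j.2) (by positivity)

lemma summable_tailSum (hθ : (2 : ℝ) ^ (-θ) < 2) {b : ℤ → ℝ} {C : ℝ}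
    (hb : ∀ j ≤ h, |b j| ≤ C * 2 ^ (θ * (j - N))) :
    Summable fun j : {j : ℤ // j ≤ h} => (2 : ℝ) ^ ((j : ℝ) - h - 1) * b j :=
  .of_norm_bounded ((hasSum_tailSum_weight N h hθ).mul_left C).summable (norm_tailSum_term_le hb)

lemma abs_tailSum_le (hθ : (2 : ℝ) ^ (-θ) < 2) {b : ℤ → ℝ} {C : ℝ}
    (hb : ∀ j ≤ h, |b j| ≤ C * 2 ^ (θ * (j - N))) :
    |tailSum h b| ≤ C / (2 - 2 ^ (-θ)) * 2 ^ (θ * (h - N)) := by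
  rw [div_mul_eq_mul_div, mul_div_assoc]
  exact tsum_of_norm_bounded ((hasSum_tailSum_weight N h hθ).mul_left C) (norm_tailSum_term_le hb)

lemma tailSum_sub (hθ : (2 : ℝ) ^ (-θ) < 2) {b b' : ℤ → ℝ} {C C' : ℝ}
    (hb : ∀ j ≤ h, |b j| ≤ C * 2 ^ (θ * (j - N)))
    (hb' : ∀ j ≤ h, |b' j| ≤ C' * 2 ^ (θ * (j - N))) :
    tailSum h b - tailSum h b' = tailSum h (b - b') := by
  rw [tailSum, tailSum, ← (summable_tailSum hθ hb).tsum_sub (summable_tailSum hθ hb')]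
  simp only [tailSum, Pi.sub_apply, mul_sub]

end TailSum

end

theorem counterterm_fixed_point_general (θ : ℝ)
    (N : ℤ) (ρ L : ℝ) (hρ : 0 < ρ) (hL0 : 0 ≤ L) (hL : L < 2 - (2 : ℝ) ^ (-θ))
    (β : ℤ → (ℤ → ℝ) → ℝ)
    (hβbd : ∀ j : ℤ, j ≤ N → ∀ ν : ℤ → ℝ, InThetaBall θ N ρ ν →
      |β j ν| ≤ ρ * (2 - (2 : ℝ) ^ (-θ)) * (2 : ℝ) ^ (θ * ((j : ℝ) - (N : ℝ))))
    (hβlip : ∀ j : ℤ, j ≤ N → ∀ ν ν' : ℤ → ℝ,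
      InThetaBall θ N ρ ν → InThetaBall θ N ρ ν' → ∀ M : ℝ,
      (∀ k : ℤ, k ≤ N → |ν k - ν' k| ≤ M * (2 : ℝ) ^ (θ * ((k : ℝ) - (N : ℝ)))) →
      |β j ν - β j ν'| ≤ L * M * (2 : ℝ) ^ (θ * ((j : ℝ) - (N : ℝ))))
    (T : (ℤ → ℝ) → (ℤ → ℝ))
    (hT : ∀ ν : ℤ → ℝ, ∀ h : ℤ, h ≤ N →
      T ν h = -∑' j : {j : ℤ // j ≤ h},
        (2 : ℝ) ^ (((j : ℤ) : ℝ) - (h : ℝ) - 1) * β (j : ℤ) ν) :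
    (∀ ν : ℤ → ℝ, InThetaBall θ N ρ ν → ∀ h : ℤ, h ≤ N →
      |T ν h| ≤ ρ * (2 : ℝ) ^ (θ * ((h : ℝ) - (N : ℝ)))) ∧
    (∀ ν ν' : ℤ → ℝ, InThetaBall θ N ρ ν → InThetaBall θ N ρ ν' → ∀ M : ℝ, 0 ≤ M →
      (∀ k : ℤ, k ≤ N → |ν k - ν' k| ≤ M * (2 : ℝ) ^ (θ * ((k : ℝ) - (N : ℝ)))) →
      ∀ h : ℤ, h ≤ N →
        |T ν h - T ν' h| ≤ (L / (2 - (2 : ℝ) ^ (-θ))) * M * (2 : ℝ) ^ (θ * ((h : ℝ) - (N : ℝ)))) ∧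
    (∃ νstar : ℤ → ℝ, InThetaBall θ N ρ νstar ∧ (∀ h : ℤ, h ≤ N → νstar h = T νstar h) ∧
      ∀ ν' : ℤ → ℝ, InThetaBall θ N ρ ν' → (∀ h : ℤ, h ≤ N → ν' h = T ν' h) →
        ∀ h : ℤ, h ≤ N → ν' h = νstar h) := by
  have hD : 0 < 2 - (2 : ℝ) ^ (-θ) := hL0.trans_lt hL
  have hθ : (2 : ℝ) ^ (-θ) < 2 := sub_pos.1 hD
  have hT' : ∀ ν, ∀ h ≤ N, T ν h = -tailSum h (fun j => β j ν) := hT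
  have hβbd' (ν : ℤ → ℝ) (hν : InThetaBall θ N ρ ν) (h : ℤ) (hh : h ≤ N) :
      ∀ j ≤ h, |β j ν| ≤ ρ * (2 - 2 ^ (-θ)) * 2 ^ (θ * (j - N)) :=
    fun j hj => hβbd j (hj.trans hh) ν hν
  have hmaps : ∀ ν, InThetaBall θ N ρ ν → ∀ h ≤ N, |T ν h| ≤ ρ * 2 ^ (θ * (h - N)) := by
    intro ν hν h hh
    rw [hT' ν h hh, abs_neg]
    refine (abs_tailSum_le hθ (hβbd' ν hν h hh)).trans_eq ?_
    field_simp
  have hcontr : ∀ ν ν', InThetaBall θ N ρ ν → InThetaBall θ N ρ ν' → ∀ M : ℝ, 0 ≤ M →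
      (∀ k ≤ N, |ν k - ν' k| ≤ M * 2 ^ (θ * (k - N))) →
      ∀ h ≤ N, |T ν h - T ν' h| ≤ L / (2 - 2 ^ (-θ)) * M * 2 ^ (θ * (h - N)) := by
    intro ν ν' hν hν' M _ hνν' h hh
    rw [hT' ν h hh, hT' ν' h hh, neg_sub_neg, abs_sub_comm,
      tailSum_sub hθ (hβbd' ν hν h hh) (hβbd' ν' hν' h hh), div_mul_eq_mul_div]
    exact abs_tailSum_le hθ fun j hj => hβlip j (hj.trans hh) ν ν' hν hν' M hνν'
  obtain ⟨ν, hν, hfix, huniq⟩ := exists_unique_fixed_of_weighted_contraction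
    (w := fun k : ℤ => (2 : ℝ) ^ (θ * ((k : ℝ) - (N : ℝ)))) (s := Set.Iic N)
    (fun _ _ => by positivity) hρ.le (div_nonneg hL0 hD.le) ((div_lt_one hD).2 hL)
    hmaps (fun ν hν ν' hν' => hcontr ν ν' hν hν')
  exact ⟨hmaps, hcontr, ν, hν, hfix, huniq⟩

/-- Fixed point equation determining the temperature counterterm: under the
stated bounds and Lipschitz property of the beta function `β_j` on the ball
`B_ρ` of the weighted `ℓ^∞` space, the map `(Tν)_h = −Σ_{j ≤ h} 2^{j−h−1} β_j(ν)`
maps `B_ρ` into itself, is a contraction with constant `L/(2−2^{−θ}) < 1`, and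
has a unique fixed point `ν*` in `B_ρ`. -/
theorem counterterm_fixed_point (θ : ℝ) (hθ0 : 0 < θ) (hθ1 : θ < 1)
    (N : ℤ) (ρ L : ℝ) (hρ : 0 < ρ) (hL0 : 0 ≤ L) (hL : L < 2 - (2 : ℝ) ^ (-θ))
    (β : ℤ → (ℤ → ℝ) → ℝ)
    (hβloc : ∀ j : ℤ, j ≤ N → ∀ ν ν' : ℤ → ℝ,
      (∀ k : ℤ, k ≤ N → ν k = ν' k) → β j ν = β j ν')
    (hβbd : ∀ j : ℤ, j ≤ N → ∀ ν : ℤ → ℝ, InThetaBall θ N ρ ν →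
      |β j ν| ≤ ρ * (2 - (2 : ℝ) ^ (-θ)) * (2 : ℝ) ^ (θ * ((j : ℝ) - (N : ℝ))))
    (hβlip : ∀ j : ℤ, j ≤ N → ∀ ν ν' : ℤ → ℝ,
      InThetaBall θ N ρ ν → InThetaBall θ N ρ ν' → ∀ M : ℝ,
      (∀ k : ℤ, k ≤ N → |ν k - ν' k| ≤ M * (2 : ℝ) ^ (θ * ((k : ℝ) - (N : ℝ)))) →
      |β j ν - β j ν'| ≤ L * M * (2 : ℝ) ^ (θ * ((j : ℝ) - (N : ℝ))))
    (T : (ℤ → ℝ) → (ℤ → ℝ))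
    (hT : ∀ ν : ℤ → ℝ, ∀ h : ℤ, h ≤ N →
      T ν h = -∑' j : {j : ℤ // j ≤ h},
        (2 : ℝ) ^ (((j : ℤ) : ℝ) - (h : ℝ) - 1) * β (j : ℤ) ν) :
    (∀ ν : ℤ → ℝ, InThetaBall θ N ρ ν → ∀ h : ℤ, h ≤ N →
      |T ν h| ≤ ρ * (2 : ℝ) ^ (θ * ((h : ℝ) - (N : ℝ)))) ∧
    (∀ ν ν' : ℤ → ℝ, InThetaBall θ N ρ ν → InThetaBall θ N ρ ν' → ∀ M : ℝ, 0 ≤ M →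
      (∀ k : ℤ, k ≤ N → |ν k - ν' k| ≤ M * (2 : ℝ) ^ (θ * ((k : ℝ) - (N : ℝ)))) →
      ∀ h : ℤ, h ≤ N →
        |T ν h - T ν' h| ≤ (L / (2 - (2 : ℝ) ^ (-θ))) * M * (2 : ℝ) ^ (θ * ((h : ℝ) - (N : ℝ)))) ∧
    (∃ νstar : ℤ → ℝ, InThetaBall θ N ρ νstar ∧ (∀ h : ℤ, h ≤ N → νstar h = T νstar h) ∧
      ∀ ν' : ℤ → ℝ, InThetaBall θ N ρ ν' → (∀ h : ℤ, h ≤ N → ν' h = T ν' h) →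
        ∀ h : ℤ, h ≤ N → ν' h = νstar h) :=
  counterterm_fixed_point_general θ N ρ L hρ hL0 hL β hβbd hβlip T hT
end
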